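/- arXiv:1008.2435 — 2 statements merged into one kernel-verified Lean document; each statement's English description precedes it below -/
import Mathlib

section
/- Let 𝔤_λ be an oscillator Lie algebra and let ξ : 𝔤_λ → ⋀²𝔤_λ be a Lie bialgebra structure on 𝔤_λ. Then for all i, j ∈ {1,…,n} with i ≠ j: c_{i,i} = 0 (as a functional on 𝔤_λ); b_{i,j}(e_i) = b_{i,j}(ě_i) = b_{i,j}(e_j) = b_{i,j}(ě_j) = 0; b̌_{i,j}(e_i) = b̌_{i,j}(ě_i) = b̌_{i,j}(e_j) = b̌_{i,j}(ě_j) = 0; and c_{i,j}(e_i) = c_{i,j}(ě_i) = c_{i,j}(e_j) = c_{i,j}(ě_j) = 0. -/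
open Module LinearMap

noncomputable section

/-- Index type for the basis of an oscillator Lie algebra:
`Sum.inl 0 ↦ e₋₁`, `Sum.inl 1 ↦ e₀`, `Sum.inr (Sum.inl i) ↦ eᵢ`,
`Sum.inr (Sum.inr i) ↦ ěᵢ`. -/
abbrev OscIdx (n : ℕ) := Fin 2 ⊕ (Fin n ⊕ Fin n)

/-- The oscillator Lie algebra `𝔤_λ`: a real Lie algebra `L` together with a basis
`{e₋₁, e₀, e₁, …, eₙ, ě₁, …, ěₙ}` whose nonzero brackets on basis vectors are
`[e₋₁, eⱼ] = λⱼ ěⱼ`, `[e₋₁, ěⱼ] = −λⱼ eⱼ`, `[eⱼ, ěⱼ] = e₀` (all other brackets of the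
basis vectors vanish or follow by antisymmetry; in particular `e₀` is central). -/
structure OscAlg (n : ℕ) (lam : Fin n → ℝ) (L : Type) [LieRing L] [LieAlgebra ℝ L] where
  basis : Basis (OscIdx n) ℝ L
  bracket_em_e : ∀ j, ⁅basis (Sum.inl 0), basis (Sum.inr (Sum.inl j))⁆
      = lam j • basis (Sum.inr (Sum.inr j))
  bracket_em_f : ∀ j, ⁅basis (Sum.inl 0), basis (Sum.inr (Sum.inr j))⁆
      = -lam j • basis (Sum.inr (Sum.inl j))
  bracket_e_f : ∀ i j, ⁅basis (Sum.inr (Sum.inl i)), basis (Sum.inr (Sum.inr j))⁆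
      = if i = j then basis (Sum.inl 1) else 0
  bracket_e_e : ∀ i j, ⁅basis (Sum.inr (Sum.inl i)), basis (Sum.inr (Sum.inl j))⁆ = 0
  bracket_f_f : ∀ i j, ⁅basis (Sum.inr (Sum.inr i)), basis (Sum.inr (Sum.inr j))⁆ = 0
  bracket_e0 : ∀ x : L, ⁅basis (Sum.inl 1), x⁆ = 0

/-- `0 < λ₁ ≤ … ≤ λₙ`: the standing assumption on the parameters of an oscillator
Lie algebra. -/
def OscParam {n : ℕ} (lam : Fin n → ℝ) : Prop := (∀ i, 0 < lam i) ∧ Monotone lam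

/-- Genericity: `0 < λ₁ < … < λₙ` and `λ_k ≠ λ_i + λ_j` for all `i < j < k`. -/
def IsGeneric {n : ℕ} (lam : Fin n → ℝ) : Prop :=
  (∀ i, 0 < lam i) ∧ StrictMono lam ∧
    ∀ i j k : Fin n, i < j → j < k → lam k ≠ lam i + lam j

namespace OscAlg

variable {n : ℕ} {lam : Fin n → ℝ} {L : Type} [LieRing L] [LieAlgebra ℝ L]

/-- `e₋₁`. -/
def em (B : OscAlg n lam L) : L := B.basis (Sum.inl 0)
/-- `e₀`. -/
def e0 (B : OscAlg n lam L) : L := B.basis (Sum.inl 1)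
/-- `eᵢ`. -/
def e (B : OscAlg n lam L) (i : Fin n) : L := B.basis (Sum.inr (Sum.inl i))
/-- `ěᵢ`. -/
def f (B : OscAlg n lam L) (i : Fin n) : L := B.basis (Sum.inr (Sum.inr i))
/-- `e₋₁*`, an element of the dual basis. -/
def em' (B : OscAlg n lam L) : Dual ℝ L := B.basis.coord (Sum.inl 0)
/-- `e₀*`. -/
def e0' (B : OscAlg n lam L) : Dual ℝ L := B.basis.coord (Sum.inl 1)
/-- `eᵢ*`. -/
def e' (B : OscAlg n lam L) (i : Fin n) : Dual ℝ L := B.basis.coord (Sum.inr (Sum.inl i))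
/-- `ěᵢ*`. -/
def f' (B : OscAlg n lam L) (i : Fin n) : Dual ℝ L := B.basis.coord (Sum.inr (Sum.inr i))

/-- The subspace `S` spanned by the `eᵢ, ěᵢ`. -/
def S (B : OscAlg n lam L) : Submodule ℝ L :=
  Submodule.span ℝ (Set.range B.e ∪ Set.range B.f)

/-- The `2`-form `ω` on `𝔤_λ`, viewed as a linear map `𝔤_λ → 𝔤_λ*`:
`ω(e₋₁,·) = ω(e₀,·) = 0`, `ω(eᵢ,eⱼ) = ω(ěᵢ,ěⱼ) = 0`, `ω(eᵢ,ěⱼ) = δᵢⱼ`. -/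
def om (B : OscAlg n lam L) : L →ₗ[ℝ] Dual ℝ L :=
  ∑ i : Fin n, ((B.e' i).smulRight (B.f' i) - (B.f' i).smulRight (B.e' i))

/-- The derivation `J_a` of `𝔤_λ` given by `J_a(e₋₁) = J_a(e₀) = 0`, `J_a(eᵢ) = aᵢ ěᵢ`,
`J_a(ěᵢ) = −aᵢ eᵢ`. -/
def Ja (B : OscAlg n lam L) (a : Fin n → ℝ) : L →ₗ[ℝ] L :=
  B.basis.constr ℝ (Sum.elim (fun _ => (0 : L))
    (Sum.elim (fun i => a i • B.f i) (fun i => -(a i) • B.e i)))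

end OscAlg

section Bivectors

variable {L : Type} [LieRing L] [LieAlgebra ℝ L]

/-- `x ∧ y`, viewed as the linear map `𝔤* → 𝔤`, `α ↦ α(x) y − α(y) x`; this corresponds
to the skew-symmetric bilinear form `(α,β) ↦ α(x)β(y) − α(y)β(x)` on `𝔤*`. -/
def wedge (x y : L) : Dual ℝ L →ₗ[ℝ] L :=
  (Module.Dual.eval ℝ L x).smulRight y - (Module.Dual.eval ℝ L y).smulRight x

/-- A bivector `r ∈ ⋀²𝔤`, identified with the linear map `r_# : 𝔤* → 𝔤` of the
corresponding skew-symmetric bilinear form on `𝔤*` (so `r(α,β) = β(r_#(α))`). -/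
def IsBivector (r : Dual ℝ L →ₗ[ℝ] L) : Prop := ∀ α β : Dual ℝ L, α (r β) = - β (r α)

/-- The coadjoint action `ad*_u α := α ∘ ad_u`. -/
def coad (u : L) : Dual ℝ L →ₗ[ℝ] Dual ℝ L := (LieAlgebra.ad ℝ L u).dualMap

/-- `J† r` for an endomorphism `J` of `𝔤`; in terms of bilinear forms,
`(J† r)(α,β) = r(α∘J, β) + r(α, β∘J)`. -/
def dag (J : L →ₗ[ℝ] L) (r : Dual ℝ L →ₗ[ℝ] L) : Dual ℝ L →ₗ[ℝ] L :=
  r ∘ₗ J.dualMap + J ∘ₗ r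

/-- The adjoint action `ad_u† r` of `u ∈ 𝔤` on bivectors:
`(ad_u† r)(α,β) = r(ad*_u α, β) + r(α, ad*_u β)`. -/
def adDag (u : L) (r : Dual ℝ L →ₗ[ℝ] L) : Dual ℝ L →ₗ[ℝ] L :=
  dag (LieAlgebra.ad ℝ L u) r

/-- The Schouten bracket `[r,r]` of a bivector with itself:
`[r,r](α,β,γ) = 2α([r_#β, r_#γ]) + 2β([r_#γ, r_#α]) + 2γ([r_#α, r_#β])`. -/
def schouten (r : Dual ℝ L →ₗ[ℝ] L) (α β γ : Dual ℝ L) : ℝ :=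
  2 * α ⁅r β, r γ⁆ + 2 * β ⁅r γ, r α⁆ + 2 * γ ⁅r α, r β⁆

/-- `r` is a solution of the classical Yang–Baxter equation: `[r,r] = 0`. -/
def IsCYBE (r : Dual ℝ L →ₗ[ℝ] L) : Prop := ∀ α β γ : Dual ℝ L, schouten r α β γ = 0

/-- `r` is a solution of the generalized classical Yang–Baxter equation:
`ad_u [r,r] = 0` for all `u`. -/
def IsGCYBE (r : Dual ℝ L →ₗ[ℝ] L) : Prop :=
  ∀ (u : L) (α β γ : Dual ℝ L),
    schouten r (coad u α) β γ + schouten r α (coad u β) γ + schouten r α β (coad u γ) = 0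

/-- A derivation of the Lie algebra `L`. -/
def IsDerivation (J : L →ₗ[ℝ] L) : Prop := ∀ x y : L, J ⁅x, y⁆ = ⁅J x, y⁆ + ⁅x, J y⁆

/-- The 1-cocycle condition for `ξ : 𝔤 → ⋀²𝔤` with respect to the adjoint action:
`ξ([u,v]) = ad_u† ξ(v) − ad_v† ξ(u)`. -/
def IsCocycle (ξ : L →ₗ[ℝ] (Dual ℝ L →ₗ[ℝ] L)) : Prop :=
  ∀ u v : L, ξ ⁅u, v⁆ = adDag u (ξ v) - adDag v (ξ u)

/-- The dual bracket `[α,β]*` associated to `ξ : 𝔤 → ⋀²𝔤`: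
`[α,β]*(u) = ξ(u)(α,β)`. -/
def dualBr (ξ : L →ₗ[ℝ] (Dual ℝ L →ₗ[ℝ] L)) (α β : Dual ℝ L) : Dual ℝ L :=
  (β : L →ₗ[ℝ] ℝ) ∘ₗ (ξ.flip α)

/-- `ξ : 𝔤 → ⋀²𝔤` is a Lie bialgebra structure: `ξ` takes values in bivectors, is a
1-cocycle, and the dual bracket satisfies the Jacobi identity. -/
def IsBialgebra (ξ : L →ₗ[ℝ] (Dual ℝ L →ₗ[ℝ] L)) : Prop :=
  (∀ (u : L) (α β : Dual ℝ L), α (ξ u β) = - β (ξ u α)) ∧ IsCocycle ξ ∧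
  ∀ α β γ : Dual ℝ L,
    dualBr ξ (dualBr ξ α β) γ + dualBr ξ (dualBr ξ β γ) α + dualBr ξ (dualBr ξ γ α) β = 0

end Bivectors

namespace OscAlg

variable {n : ℕ} {lam : Fin n → ℝ} {L : Type} [LieRing L] [LieAlgebra ℝ L]

/-- Membership in `⋀²S`: a bivector `r` with `r_#(e₋₁*) = r_#(e₀*) = 0` and
`Im r_# ⊆ S`. -/
def InW2S (B : OscAlg n lam L) (r : Dual ℝ L →ₗ[ℝ] L) : Prop :=
  IsBivector r ∧ r B.em' = 0 ∧ r B.e0' = 0 ∧ ∀ α : Dual ℝ L, r α ∈ B.S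

/-- `ω_{r₁,r₂}(α,β) = (1/2)(ω(r₁_#(α), r₂_#(β)) + ω(r₂_#(α), r₁_#(β)))`. -/
def omPair (B : OscAlg n lam L) (r₁ r₂ : Dual ℝ L →ₗ[ℝ] L) (α β : Dual ℝ L) : ℝ :=
  (1/2) * (B.om (r₁ α) (r₂ β) + B.om (r₂ α) (r₁ β))

end OscAlg

/-! The cocycle identity, evaluated on pairs of basis vectors and pairs of dual basis vectors,
gives linear relations among the coefficients `ξ(u)(α, β)`. As every `λₖ` is nonzero, these
relations make each coefficient in question vanish or express it as `λₖ` times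
`aₖ = ξ(eₖ)(e₀*, e₋₁*)` or `ǎₖ = ξ(ěₖ)(e₀*, e₋₁*)`. These two are killed by the Jacobi identity
for `[·,·]*` on `(e₋₁*, e₀*, eᵢ*)`, evaluated at `eᵢ`: its cross terms vanish by the cocycle
relations (this needs a second index `j ≠ i`), leaving `λᵢ (aᵢ² + ǎᵢ²) = 0`. -/

section Bivectors

variable {L : Type} [LieRing L] [LieAlgebra ℝ L]

theorem IsBivector.apply_self {r : Dual ℝ L →ₗ[ℝ] L} (hr : IsBivector r) (α : Dual ℝ L) :
    α (r α) = 0 := by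
  linarith [hr α α]

theorem coad_apply (u x : L) (α : Dual ℝ L) : coad u α x = α ⁅u, x⁆ := rfl

theorem IsCocycle.apply_lie {ξ : L →ₗ[ℝ] (Dual ℝ L →ₗ[ℝ] L)} (hξ : IsCocycle ξ)
    (u v : L) (α β : Dual ℝ L) :
    β (ξ ⁅u, v⁆ α) = β (ξ v (coad u α)) + coad u β (ξ v α)
      - β (ξ u (coad v α)) - coad v β (ξ u α) := by
  rw [hξ u v]
  simp only [adDag, dag, coad, LinearMap.sub_apply, LinearMap.add_apply, comp_apply, dualMap_apply,
    LieAlgebra.ad_apply, map_sub, map_add]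
  ring

theorem dualBr_apply (ξ : L →ₗ[ℝ] (Dual ℝ L →ₗ[ℝ] L)) (α β : Dual ℝ L) (u : L) :
    dualBr ξ α β u = β (ξ u α) := rfl

theorem dualBr_dualBr_apply {ι : Type*} [Fintype ι] [DecidableEq ι] (b : Basis ι ℝ L)
    (ξ : L →ₗ[ℝ] (Dual ℝ L →ₗ[ℝ] L)) (α β γ : Dual ℝ L) (u : L) :
    dualBr ξ (dualBr ξ α β) γ u = ∑ w, β (ξ (b w) α) * γ (ξ u (b.coord w)) := by
  conv_lhs => rw [dualBr_apply, ← b.dualBasis.sum_repr (dualBr ξ α β)]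
  simp [dualBr_apply, mul_comm]

end Bivectors

namespace OscAlg

variable {n : ℕ} {lam : Fin n → ℝ} {L : Type} [LieRing L] [LieAlgebra ℝ L]
  (B : OscAlg n lam L) (ξ : L →ₗ[ℝ] (Dual ℝ L →ₗ[ℝ] L))

@[simp] theorem basis_em : B.basis (Sum.inl 0) = B.em := rfl
@[simp] theorem basis_e0 : B.basis (Sum.inl 1) = B.e0 := rfl
@[simp] theorem basis_e (k : Fin n) : B.basis (Sum.inr (Sum.inl k)) = B.e k := rfl
@[simp] theorem basis_f (k : Fin n) : B.basis (Sum.inr (Sum.inr k)) = B.f k := rfl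

theorem coord_em : B.basis.coord (Sum.inl 0) = B.em' := rfl
theorem coord_e0 : B.basis.coord (Sum.inl 1) = B.e0' := rfl
theorem coord_e (k : Fin n) : B.basis.coord (Sum.inr (Sum.inl k)) = B.e' k := rfl
theorem coord_f (k : Fin n) : B.basis.coord (Sum.inr (Sum.inr k)) = B.f' k := rfl

@[simp] theorem lie_em_e (j : Fin n) : ⁅B.em, B.e j⁆ = lam j • B.f j := B.bracket_em_e j
@[simp] theorem lie_em_f (j : Fin n) : ⁅B.em, B.f j⁆ = -lam j • B.e j := B.bracket_em_f j
@[simp] theorem lie_e_f (i j : Fin n) : ⁅B.e i, B.f j⁆ = if i = j then B.e0 else 0 :=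
  B.bracket_e_f i j
@[simp] theorem lie_e_e (i j : Fin n) : ⁅B.e i, B.e j⁆ = 0 := B.bracket_e_e i j
@[simp] theorem lie_f_f (i j : Fin n) : ⁅B.f i, B.f j⁆ = 0 := B.bracket_f_f i j
@[simp] theorem e0_lie (x : L) : ⁅B.e0, x⁆ = 0 := B.bracket_e0 x

@[simp] theorem lie_e0 (x : L) : ⁅x, B.e0⁆ = 0 := by
  rw [← lie_skew, e0_lie, neg_zero]

@[simp] theorem lie_e_em (j : Fin n) : ⁅B.e j, B.em⁆ = -lam j • B.f j := by
  rw [← lie_skew, lie_em_e, neg_smul]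

@[simp] theorem lie_f_em (j : Fin n) : ⁅B.f j, B.em⁆ = lam j • B.e j := by
  rw [← lie_skew, lie_em_f, neg_smul, neg_neg]

@[simp] theorem lie_f_e (i j : Fin n) : ⁅B.f i, B.e j⁆ = if j = i then -B.e0 else 0 := by
  rw [← lie_skew, lie_e_f]
  split_ifs <;> simp

theorem coord_basis (x y : OscIdx n) :
    B.basis.coord x (B.basis y) = if y = x then 1 else 0 := by
  rw [Basis.coord_apply, Basis.repr_self, Finsupp.single_apply]

@[simp] theorem em'_em : B.em' B.em = 1 := by
  rw [em', em, coord_basis]; simp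
@[simp] theorem em'_e0 : B.em' B.e0 = 0 := by
  rw [em', e0, coord_basis]; simp
@[simp] theorem em'_e (k : Fin n) : B.em' (B.e k) = 0 := by
  rw [em', e, coord_basis]; simp
@[simp] theorem em'_f (k : Fin n) : B.em' (B.f k) = 0 := by
  rw [em', f, coord_basis]; simp
@[simp] theorem e0'_e0 : B.e0' B.e0 = 1 := by
  rw [e0', e0, coord_basis]; simp
@[simp] theorem e0'_e (k : Fin n) : B.e0' (B.e k) = 0 := by
  rw [e0', e, coord_basis]; simp
@[simp] theorem e0'_f (k : Fin n) : B.e0' (B.f k) = 0 := by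
  rw [e0', f, coord_basis]; simp
@[simp] theorem e'_em (k : Fin n) : B.e' k B.em = 0 := by
  rw [e', em, coord_basis]; simp
@[simp] theorem e'_e0 (k : Fin n) : B.e' k B.e0 = 0 := by
  rw [e', e0, coord_basis]; simp
@[simp] theorem e'_e (k l : Fin n) : B.e' k (B.e l) = if l = k then 1 else 0 := by
  rw [e', e, coord_basis]; simp
@[simp] theorem e'_f (k l : Fin n) : B.e' k (B.f l) = 0 := by
  rw [e', f, coord_basis]; simp
@[simp] theorem f'_em (k : Fin n) : B.f' k B.em = 0 := by
  rw [f', em, coord_basis]; simp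
@[simp] theorem f'_e0 (k : Fin n) : B.f' k B.e0 = 0 := by
  rw [f', e0, coord_basis]; simp
@[simp] theorem f'_e (k l : Fin n) : B.f' k (B.e l) = 0 := by
  rw [f', e, coord_basis]; simp
@[simp] theorem f'_f (k l : Fin n) : B.f' k (B.f l) = if l = k then 1 else 0 := by
  rw [f', f, coord_basis]; simp

theorem coad_em_em' : coad B.em B.em' = 0 := by
  refine B.basis.ext fun w => ?_
  rcases w with w | w | w
  · fin_cases w <;> simp [coad_apply]
  · simp [coad_apply]
  · simp [coad_apply]

theorem coad_em_e0' : coad B.em B.e0' = 0 := by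
  refine B.basis.ext fun w => ?_
  rcases w with w | w | w
  · fin_cases w <;> simp [coad_apply]
  · simp [coad_apply]
  · simp [coad_apply]

theorem coad_em_e' (k : Fin n) : coad B.em (B.e' k) = -lam k • B.f' k := by
  refine B.basis.ext fun w => ?_
  rcases w with w | w | w
  · fin_cases w <;> simp [coad_apply]
  · simp [coad_apply]
  · by_cases h : w = k <;> simp [coad_apply, h]

theorem coad_em_f' (k : Fin n) : coad B.em (B.f' k) = lam k • B.e' k := by
  refine B.basis.ext fun w => ?_
  rcases w with w | w | w
  · fin_cases w <;> simp [coad_apply]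
  · by_cases h : w = k <;> simp [coad_apply, h]
  · simp [coad_apply]

theorem coad_e_em' (k : Fin n) : coad (B.e k) B.em' = 0 := by
  refine B.basis.ext fun w => ?_
  rcases w with w | w | w
  · fin_cases w <;> simp [coad_apply]
  · simp [coad_apply]
  · by_cases h : k = w <;> simp [coad_apply, h]

theorem coad_e_e0' (k : Fin n) : coad (B.e k) B.e0' = B.f' k := by
  refine B.basis.ext fun w => ?_
  rcases w with w | w | w
  · fin_cases w <;> simp [coad_apply]
  · simp [coad_apply]
  · by_cases h : k = w <;> simp [coad_apply, h, eq_comm]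

theorem coad_e_e' (k l : Fin n) : coad (B.e k) (B.e' l) = 0 := by
  refine B.basis.ext fun w => ?_
  rcases w with w | w | w
  · fin_cases w <;> simp [coad_apply]
  · simp [coad_apply]
  · by_cases h : k = w <;> simp [coad_apply, h]

theorem coad_e_f' (k l : Fin n) :
    coad (B.e k) (B.f' l) = if k = l then -lam k • B.em' else 0 := by
  refine B.basis.ext fun w => ?_
  rcases w with w | w | w
  · fin_cases w <;> by_cases h : k = l <;> simp [coad_apply, h]
  · by_cases h : k = l <;> simp [coad_apply, h]
  · by_cases h : k = w <;> by_cases h' : k = l <;> simp_all [coad_apply]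

theorem coad_f_em' (k : Fin n) : coad (B.f k) B.em' = 0 := by
  refine B.basis.ext fun w => ?_
  rcases w with w | w | w
  · fin_cases w <;> simp [coad_apply]
  · by_cases h : w = k <;> simp [coad_apply, h]
  · simp [coad_apply]

theorem coad_f_e0' (k : Fin n) : coad (B.f k) B.e0' = -B.e' k := by
  refine B.basis.ext fun w => ?_
  rcases w with w | w | w
  · fin_cases w <;> simp [coad_apply]
  · by_cases h : w = k <;> simp [coad_apply, h]
  · simp [coad_apply]

theorem coad_f_e' (k l : Fin n) :
    coad (B.f k) (B.e' l) = if k = l then lam k • B.em' else 0 := by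
  refine B.basis.ext fun w => ?_
  rcases w with w | w | w
  · fin_cases w <;> by_cases h : k = l <;> simp [coad_apply, h]
  · by_cases h : w = k <;> by_cases h' : k = l <;> simp_all [coad_apply]
  · by_cases h : k = l <;> simp [coad_apply, h]

theorem coad_f_f' (k l : Fin n) : coad (B.f k) (B.f' l) = 0 := by
  refine B.basis.ext fun w => ?_
  rcases w with w | w | w
  · fin_cases w <;> simp [coad_apply]
  · by_cases h : w = k <;> simp [coad_apply, h]
  · simp [coad_apply]

theorem coad_e0 (α : Dual ℝ L) : coad B.e0 α = 0 := by
  ext; simp [coad_apply]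

theorem em'_ξ_e0_e0'_eq_zero (hsk : ∀ u, IsBivector (ξ u)) (hc : IsCocycle ξ)
    (hl : ∀ k, 0 < lam k) (i : Fin n) : B.em' (ξ B.e0 B.e0') = 0 := by
  have h := hc.apply_lie (B.e i) B.e0 B.e0' (B.f' i)
  simp only [lie_e0, map_zero, LinearMap.zero_apply, coad_e_e0', (hsk _).apply_self, coad_e_f',
    ↓reduceIte, LinearMap.smul_apply, smul_eq_mul, neg_mul, zero_add, coad_e0, sub_zero] at h
  exact eq_zero_of_ne_zero_of_mul_left_eq_zero (hl i).ne' (by linear_combination h)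

theorem e'_ξ_e0_e0'_eq_zero (hc : IsCocycle ξ) (hl : ∀ k, 0 < lam k) (k : Fin n) :
    B.e' k (ξ B.e0 B.e0') = 0 := by
  have h := hc.apply_lie B.em B.e0 B.e0' (B.f' k)
  simp only [lie_e0, map_zero, LinearMap.zero_apply, coad_em_e0', coad_em_f', LinearMap.smul_apply,
    smul_eq_mul, zero_add, coad_e0, sub_zero] at h
  exact eq_zero_of_ne_zero_of_mul_left_eq_zero (hl k).ne' (by linear_combination -h)

theorem em'_ξ_e0_e'_eq_zero (hc : IsCocycle ξ) (k : Fin n) : B.em' (ξ B.e0 (B.e' k)) = 0 := by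
  have h := hc.apply_lie (B.f k) B.e0 B.e0' B.em'
  simpa [coad_f_e0', coad_f_em', coad_e0] using h

theorem f'_ξ_e0_e'_self_eq_zero (hsk : ∀ u, IsBivector (ξ u)) (hc : IsCocycle ξ) (k : Fin n) :
    B.f' k (ξ B.e0 (B.e' k)) = 0 := by
  have h := hc.apply_lie (B.e k) B.e0 B.e0' (B.e' k)
  simp only [lie_e0, map_zero, LinearMap.zero_apply, coad_e_e0', coad_e_e', add_zero, coad_e0,
    sub_zero] at h
  rw [hsk, ← h, neg_zero]

theorem em'_ξ_e_e'_eq_zero (hc : IsCocycle ξ) (hl : ∀ k, 0 < lam k) {k l : Fin n}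
    (hkl : k ≠ l) (b : Fin n) : B.em' (ξ (B.e k) (B.e' b)) = 0 := by
  have h := hc.apply_lie (B.e k) (B.e l) (B.e' b) (B.f' l)
  simp only [lie_e_e, map_zero, LinearMap.zero_apply, coad_e_e', coad_e_f', hkl, ↓reduceIte,
    add_zero, sub_self, LinearMap.smul_apply, smul_eq_mul, neg_mul, sub_neg_eq_add, zero_add] at h
  exact eq_zero_of_ne_zero_of_mul_left_eq_zero (hl l).ne' (by linear_combination -h)

theorem em'_ξ_e_f'_eq_zero_of_ne (hsk : ∀ u, IsBivector (ξ u)) (hc : IsCocycle ξ)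
    (hl : ∀ k, 0 < lam k) {k b : Fin n} (hkb : k ≠ b) : B.em' (ξ (B.e k) (B.f' b)) = 0 := by
  have h := hc.apply_lie (B.e k) (B.f b) (B.e' b) (B.f' b)
  simp only [lie_e_f, hkb, ↓reduceIte, map_zero, LinearMap.zero_apply, coad_e_e', coad_e_f',
    add_zero, coad_f_e', map_smul, smul_eq_mul, zero_sub, coad_f_f', sub_zero] at h
  have h0 : B.f' b (ξ (B.e k) B.em') = 0 :=
    eq_zero_of_ne_zero_of_mul_left_eq_zero (hl b).ne' (by linear_combination h)
  rw [hsk, h0, neg_zero]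

theorem em'_ξ_f_e'_eq_zero_of_ne (hc : IsCocycle ξ) (hl : ∀ k, 0 < lam k) {k b : Fin n}
    (hkb : k ≠ b) : B.em' (ξ (B.f k) (B.e' b)) = 0 := by
  have h := hc.apply_lie (B.e b) (B.f k) (B.e' b) (B.f' b)
  simp only [lie_e_f, hkb.symm, ↓reduceIte, map_zero, LinearMap.zero_apply, coad_e_e', coad_e_f',
    LinearMap.smul_apply, smul_eq_mul, neg_mul, zero_add, coad_f_e', hkb, sub_zero, coad_f_f'] at h
  exact eq_zero_of_ne_zero_of_mul_left_eq_zero (hl b).ne' (by linear_combination h)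

theorem em'_ξ_f_e'_self (hsk : ∀ u, IsBivector (ξ u)) (hc : IsCocycle ξ)
    (hl : ∀ k, 0 < lam k) (k : Fin n) :
    B.em' (ξ (B.f k) (B.e' k)) = B.em' (ξ (B.e k) (B.f' k)) := by
  have h := hc.apply_lie (B.e k) (B.f k) (B.e' k) (B.f' k)
  simp only [lie_e_f, ↓reduceIte, B.f'_ξ_e0_e'_self_eq_zero ξ hsk hc, coad_e_e', map_zero,
    coad_e_f', LinearMap.smul_apply, smul_eq_mul, neg_mul, zero_add, coad_f_e', map_smul, coad_f_f',
    LinearMap.zero_apply, sub_zero] at h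
  refine mul_left_cancel₀ (hl k).ne' ?_
  linear_combination h - lam k * hsk (B.e k) B.em' (B.f' k)

theorem em'_ξ_e_f'_self_eq_zero (hsk : ∀ u, IsBivector (ξ u)) (hc : IsCocycle ξ)
    (hl : ∀ k, 0 < lam k) (k : Fin n) : B.em' (ξ (B.e k) (B.f' k)) = 0 := by
  have h := hc.apply_lie B.em (B.e k) B.em' (B.e' k)
  simp only [lie_em_e, map_smul, LinearMap.smul_apply, smul_eq_mul, coad_em_em', map_zero,
    coad_em_e', neg_mul, zero_add, coad_e_em', sub_zero, coad_e_e', LinearMap.zero_apply] at h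
  have hfe := B.em'_ξ_f_e'_self ξ hsk hc hl k
  refine eq_zero_of_ne_zero_of_mul_left_eq_zero (hl k).ne' ?_
  linear_combination -h / 2 + lam k / 2 * hsk (B.f k) B.em' (B.e' k)
    + lam k / 2 * hsk (B.e k) B.em' (B.f' k) - lam k / 2 * hfe

theorem em'_ξ_em_e' (hsk : ∀ u, IsBivector (ξ u)) (hc : IsCocycle ξ) (k : Fin n) :
    B.em' (ξ B.em (B.e' k)) = -lam k * B.em' (ξ (B.e k) B.e0') := by
  have h := hc.apply_lie B.em (B.f k) B.em' B.e0'
  simp only [lie_em_f, neg_smul, map_neg, map_smul, LinearMap.neg_apply, LinearMap.smul_apply,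
    smul_eq_mul, coad_em_em', map_zero, coad_em_e0', LinearMap.zero_apply, add_zero, coad_f_em',
    sub_self, coad_f_e0', sub_neg_eq_add, zero_add] at h
  linear_combination h + lam k * hsk (B.e k) B.e0' B.em' + hsk B.em (B.e' k) B.em'

theorem em'_ξ_em_f' (hsk : ∀ u, IsBivector (ξ u)) (hc : IsCocycle ξ) (k : Fin n) :
    B.em' (ξ B.em (B.f' k)) = -lam k * B.em' (ξ (B.f k) B.e0') := by
  have h := hc.apply_lie B.em (B.e k) B.em' B.e0'
  simp only [lie_em_e, map_smul, LinearMap.smul_apply, smul_eq_mul, coad_em_em', map_zero,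
    coad_em_e0', LinearMap.zero_apply, add_zero, coad_e_em', sub_self, coad_e_e0', zero_sub] at h
  linear_combination -h + lam k * hsk (B.f k) B.e0' B.em' + hsk B.em (B.f' k) B.em'

theorem f'_ξ_e_e'_self (hsk : ∀ u, IsBivector (ξ u)) (hc : IsCocycle ξ)
    (hl : ∀ k, 0 < lam k) (k : Fin n) :
    B.f' k (ξ (B.e k) (B.e' k)) = lam k * B.em' (ξ (B.f k) B.e0') := by
  have h := hc.apply_lie B.em (B.f k) (B.e' k) (B.f' k)
  simp only [lie_em_f, neg_smul, map_neg, map_smul, LinearMap.neg_apply, LinearMap.smul_apply,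
    smul_eq_mul, coad_em_e', (hsk _).apply_self, mul_zero, neg_zero, coad_em_f', add_zero,
    coad_f_e', ↓reduceIte, zero_sub, coad_f_f', LinearMap.zero_apply, sub_zero] at h
  refine mul_left_cancel₀ (hl k).ne' ?_
  linear_combination -h + lam k * hsk B.em (B.f' k) B.em' - lam k * B.em'_ξ_em_f' ξ hsk hc k

theorem f'_ξ_f_e'_self (hsk : ∀ u, IsBivector (ξ u)) (hc : IsCocycle ξ)
    (hl : ∀ k, 0 < lam k) (k : Fin n) :
    B.f' k (ξ (B.f k) (B.e' k)) = -lam k * B.em' (ξ (B.e k) B.e0') := by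
  have h := hc.apply_lie B.em (B.e k) (B.e' k) (B.f' k)
  simp only [lie_em_e, map_smul, LinearMap.smul_apply, smul_eq_mul, coad_em_e', neg_smul, map_neg,
    (hsk _).apply_self, mul_zero, neg_zero, coad_em_f', add_zero, coad_e_e', map_zero, sub_self,
    coad_e_f', ↓reduceIte, neg_mul, sub_neg_eq_add, zero_add] at h
  refine mul_left_cancel₀ (hl k).ne' ?_
  linear_combination h + lam k * B.em'_ξ_em_e' ξ hsk hc k

theorem f'_ξ_em_e'_self_eq_zero (hsk : ∀ u, IsBivector (ξ u)) (hc : IsCocycle ξ) (k : Fin n) :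
    B.f' k (ξ B.em (B.e' k)) = 0 := by
  have h1 := hc.apply_lie B.em (B.e k) B.e0' (B.e' k)
  simp only [lie_em_e, map_smul, LinearMap.smul_apply, smul_eq_mul, coad_em_e0', map_zero,
    coad_em_e', neg_mul, zero_add, coad_e_e0', coad_e_e', LinearMap.zero_apply, sub_zero] at h1
  have h2 := hc.apply_lie B.em (B.f k) B.e0' (B.f' k)
  simp only [lie_em_f, neg_smul, map_neg, map_smul, LinearMap.neg_apply, LinearMap.smul_apply,
    smul_eq_mul, coad_em_e0', map_zero, coad_em_f', zero_add, coad_f_e0', sub_neg_eq_add, coad_f_f',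
    LinearMap.zero_apply, sub_zero] at h2
  have s1 := hsk B.em (B.e' k) (B.f' k)
  linarith

theorem e0'_ξ_em_em'_eq_zero (hsk : ∀ u, IsBivector (ξ u)) (hc : IsCocycle ξ)
    (hl : ∀ k, 0 < lam k) (k : Fin n) : B.e0' (ξ B.em B.em') = 0 := by
  have h1 := hc.apply_lie B.em (B.f k) B.e0' (B.e' k)
  simp only [lie_em_f, neg_smul, map_neg, map_smul, LinearMap.neg_apply, LinearMap.smul_apply,
    smul_eq_mul, coad_em_e0', map_zero, coad_em_e', neg_mul, zero_add, coad_f_e0',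
    (hsk _).apply_self, neg_zero, sub_zero, coad_f_e', ↓reduceIte] at h1
  have h2 := hc.apply_lie B.em (B.e k) B.e0' (B.f' k)
  simp only [lie_em_e, map_smul, LinearMap.smul_apply, smul_eq_mul, coad_em_e0', map_zero,
    coad_em_f', zero_add, coad_e_e0', (hsk _).apply_self, sub_zero, coad_e_f', ↓reduceIte, neg_mul,
    sub_neg_eq_add] at h2
  have hmain : lam k * B.em' (ξ B.em B.e0') = 0 := by linarith
  rw [hsk, eq_zero_of_ne_zero_of_mul_left_eq_zero (hl k).ne' hmain, neg_zero]

theorem f'_ξ_e_f'_of_ne (hsk : ∀ u, IsBivector (ξ u)) (hc : IsCocycle ξ) {k b : Fin n}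
    (hkb : k ≠ b) : B.f' b (ξ (B.e k) (B.f' k)) = lam k * B.em' (ξ (B.e b) B.e0') := by
  have h := hc.apply_lie (B.e k) (B.e b) B.e0' (B.f' k)
  simp only [lie_e_e, map_zero, LinearMap.zero_apply, coad_e_e0', (hsk _).apply_self, coad_e_f',
    ↓reduceIte, LinearMap.smul_apply, smul_eq_mul, neg_mul, zero_add, hkb.symm, sub_zero] at h
  linear_combination hsk (B.e k) (B.f' b) (B.f' k) - h

theorem f'_ξ_f_e'_of_ne (hsk : ∀ u, IsBivector (ξ u)) (hc : IsCocycle ξ) {k b : Fin n}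
    (hkb : k ≠ b) : B.f' b (ξ (B.f k) (B.e' k)) = -lam k * B.em' (ξ (B.e b) B.e0') := by
  have h := hc.apply_lie (B.e b) (B.f k) B.e0' (B.e' k)
  simp only [lie_e_f, hkb.symm, ↓reduceIte, map_zero, LinearMap.zero_apply, coad_e_e0', coad_e_e',
    add_zero, coad_f_e0', map_neg, (hsk _).apply_self, neg_zero, sub_zero, coad_f_e',
    LinearMap.smul_apply, smul_eq_mul] at h
  linear_combination h + hsk (B.f k) (B.f' b) (B.e' k)

theorem e'_ξ_f_e'_of_ne (hsk : ∀ u, IsBivector (ξ u)) (hc : IsCocycle ξ) {k b : Fin n}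
    (hkb : k ≠ b) : B.e' b (ξ (B.f k) (B.e' k)) = lam k * B.em' (ξ (B.f b) B.e0') := by
  have h := hc.apply_lie (B.f k) (B.f b) B.e0' (B.e' k)
  simp only [lie_f_f, map_zero, LinearMap.zero_apply, coad_f_e0', map_neg, (hsk _).apply_self,
    neg_zero, coad_f_e', ↓reduceIte, LinearMap.smul_apply, smul_eq_mul, zero_add, sub_neg_eq_add,
    hkb.symm, sub_zero] at h
  linear_combination h + hsk (B.f k) (B.e' b) (B.e' k)

theorem f'_ξ_e_e'_of_ne (hsk : ∀ u, IsBivector (ξ u)) (hc : IsCocycle ξ) {k b : Fin n}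
    (hkb : k ≠ b) : B.f' k (ξ (B.e k) (B.e' b)) = lam k * B.em' (ξ (B.f b) B.e0') := by
  have h := hc.apply_lie (B.e k) (B.f b) B.e0' (B.f' k)
  simp only [lie_e_f, hkb, ↓reduceIte, map_zero, LinearMap.zero_apply, coad_e_e0',
    (hsk _).apply_self, coad_e_f', LinearMap.smul_apply, smul_eq_mul, neg_mul, zero_add, coad_f_e0',
    map_neg, sub_neg_eq_add, coad_f_f', sub_zero] at h
  linear_combination -h

theorem f'_ξ_e_e'_diag_eq_zero (hsk : ∀ u, IsBivector (ξ u)) (hc : IsCocycle ξ)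
    (hl : ∀ k, 0 < lam k) {k b : Fin n} (hkb : k ≠ b) : B.f' b (ξ (B.e k) (B.e' b)) = 0 := by
  have h := hc.apply_lie B.em (B.f k) (B.e' b) (B.f' b)
  simp only [lie_em_f, neg_smul, map_neg, map_smul, LinearMap.neg_apply, LinearMap.smul_apply,
    smul_eq_mul, coad_em_e', (hsk _).apply_self, mul_zero, neg_zero, coad_em_f', add_zero,
    coad_f_e', hkb, ↓reduceIte, map_zero, sub_self, coad_f_f', LinearMap.zero_apply,
    neg_eq_zero] at h
  exact eq_zero_of_ne_zero_of_mul_left_eq_zero (hl k).ne' (by linear_combination h)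

theorem f'_ξ_f_e'_diag_eq_zero (hsk : ∀ u, IsBivector (ξ u)) (hc : IsCocycle ξ)
    (hl : ∀ k, 0 < lam k) {k b : Fin n} (hkb : k ≠ b) : B.f' b (ξ (B.f k) (B.e' b)) = 0 := by
  have h := hc.apply_lie B.em (B.e k) (B.e' b) (B.f' b)
  simp only [lie_em_e, map_smul, LinearMap.smul_apply, smul_eq_mul, coad_em_e', neg_smul, map_neg,
    (hsk _).apply_self, mul_zero, neg_zero, coad_em_f', add_zero, coad_e_e', map_zero, sub_self,
    coad_e_f', hkb, ↓reduceIte, LinearMap.zero_apply] at h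
  exact eq_zero_of_ne_zero_of_mul_left_eq_zero (hl k).ne' (by linear_combination h)

theorem e'_ξ_e_e'_eq_zero_of_ne (hsk : ∀ u, IsBivector (ξ u)) (hc : IsCocycle ξ)
    (hl : ∀ k, 0 < lam k) {k b : Fin n} (hkb : k ≠ b) : B.e' b (ξ (B.e k) (B.e' k)) = 0 := by
  have h := hc.apply_lie B.em (B.e k) (B.e' k) (B.f' b)
  simp only [lie_em_e, map_smul, LinearMap.smul_apply, smul_eq_mul, coad_em_e', neg_smul, map_neg,
    coad_em_f', coad_e_e', map_zero, sub_zero, coad_e_f', hkb, ↓reduceIte,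
    LinearMap.zero_apply] at h
  refine eq_zero_of_ne_zero_of_mul_left_eq_zero (hl b).ne' ?_
  linear_combination -h + lam k * B.f'_ξ_e_f'_of_ne ξ hsk hc hkb
    + lam k * B.f'_ξ_f_e'_of_ne ξ hsk hc hkb

theorem e'_ξ_e_f'_eq_zero_of_ne (hsk : ∀ u, IsBivector (ξ u)) (hc : IsCocycle ξ)
    (hl : ∀ k, 0 < lam k) {k b : Fin n} (hkb : k ≠ b) : B.e' k (ξ (B.e k) (B.f' b)) = 0 := by
  have h := hc.apply_lie (B.e k) (B.e b) B.e0' (B.e' k)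
  simp only [lie_e_e, map_zero, LinearMap.zero_apply, coad_e_e0', coad_e_e', add_zero,
    sub_zero] at h
  linear_combination h + hsk (B.e b) (B.e' k) (B.f' k)
    - B.f'_ξ_e_e'_diag_eq_zero ξ hsk hc hl hkb.symm

theorem f'_ξ_f_f'_eq_zero_of_ne (hsk : ∀ u, IsBivector (ξ u)) (hc : IsCocycle ξ)
    (hl : ∀ k, 0 < lam k) {k b : Fin n} (hkb : k ≠ b) : B.f' k (ξ (B.f k) (B.f' b)) = 0 := by
  have h := hc.apply_lie (B.e b) (B.f k) B.e0' (B.f' k)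
  simp only [lie_e_f, hkb.symm, ↓reduceIte, map_zero, LinearMap.zero_apply, coad_e_e0', coad_e_f',
    add_zero, coad_f_e0', map_neg, sub_neg_eq_add, coad_f_f', sub_zero] at h
  linear_combination -h - B.f'_ξ_e_e'_diag_eq_zero ξ hsk hc hl hkb.symm

theorem f'_ξ_f_e'_eq_zero_of_ne (hsk : ∀ u, IsBivector (ξ u)) (hc : IsCocycle ξ)
    (hl : ∀ k, 0 < lam k) {k b : Fin n} (hkb : k ≠ b) : B.f' k (ξ (B.f k) (B.e' b)) = 0 := by
  have h := hc.apply_lie (B.f k) (B.f b) B.e0' (B.f' k)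
  simp only [lie_f_f, map_zero, LinearMap.zero_apply, coad_f_e0', map_neg, coad_f_f', add_zero,
    sub_neg_eq_add, sub_zero] at h
  linear_combination -h + B.f'_ξ_f_e'_diag_eq_zero ξ hsk hc hl hkb.symm

theorem dualBr_dualBr_em'_e0'_e'_apply_e (hsk : ∀ u, IsBivector (ξ u)) (hc : IsCocycle ξ)
    (hl : ∀ k, 0 < lam k) (i : Fin n) :
    dualBr ξ (dualBr ξ B.em' B.e0') (B.e' i) (B.e i) = lam i * B.em' (ξ (B.f i) B.e0') ^ 2 := by
  have he : ∀ k, B.e' i (ξ (B.e i) (B.e' k)) = 0 := fun k => by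
    rcases eq_or_ne k i with rfl | hk
    · exact (hsk _).apply_self _
    · rw [hsk, B.e'_ξ_e_e'_eq_zero_of_ne ξ hsk hc hl hk.symm, neg_zero]
  have hf : ∀ k ≠ i, B.e' i (ξ (B.e i) (B.f' k)) = 0 := fun k hk =>
    B.e'_ξ_e_f'_eq_zero_of_ne ξ hsk hc hl hk.symm
  rw [dualBr_dualBr_apply B.basis]
  simp only [Fintype.sum_sum_type, Fin.sum_univ_two, basis_em, basis_e0, basis_e, basis_f,
    coord_em, coord_e0, coord_e, coord_f, he, mul_zero, Finset.sum_const_zero]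
  rw [Finset.sum_eq_single i (fun k _ hk => by rw [hf k hk, mul_zero]) (by simp),
    B.e0'_ξ_em_em'_eq_zero ξ hsk hc hl i, hsk B.e0 B.e0' B.em',
    B.em'_ξ_e0_e0'_eq_zero ξ hsk hc hl i, hsk (B.f i) B.e0' B.em',
    hsk (B.e i) (B.e' i) (B.f' i), B.f'_ξ_e_e'_self ξ hsk hc hl]
  ring

theorem dualBr_dualBr_e0'_e'_em'_apply_e (hsk : ∀ u, IsBivector (ξ u)) (hc : IsCocycle ξ)
    (hl : ∀ k, 0 < lam k) {i j : Fin n} (hij : i ≠ j) :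
    dualBr ξ (dualBr ξ B.e0' (B.e' i)) B.em' (B.e i) = 0 := by
  have hf : ∀ k, B.em' (ξ (B.e i) (B.f' k)) = 0 := fun k => by
    rcases eq_or_ne i k with rfl | hk
    · exact B.em'_ξ_e_f'_self_eq_zero ξ hsk hc hl i
    · exact B.em'_ξ_e_f'_eq_zero_of_ne ξ hsk hc hl hk
  rw [dualBr_dualBr_apply B.basis]
  simp only [Fintype.sum_sum_type, Fin.sum_univ_two, basis_em, basis_e0, basis_e, basis_f,
    coord_em, coord_e0, coord_e, coord_f, hf, B.em'_ξ_e_e'_eq_zero ξ hc hl hij,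
    (hsk _).apply_self, B.e'_ξ_e0_e0'_eq_zero ξ hc hl, mul_zero, zero_mul, Finset.sum_const_zero,
    add_zero]

theorem dualBr_dualBr_e'_em'_e0'_apply_e (hsk : ∀ u, IsBivector (ξ u)) (hc : IsCocycle ξ)
    (hl : ∀ k, 0 < lam k) {i j : Fin n} (hij : i ≠ j) :
    dualBr ξ (dualBr ξ (B.e' i) B.em') B.e0' (B.e i) = lam i * B.em' (ξ (B.e i) B.e0') ^ 2 := by
  have he : ∀ k, B.em' (ξ (B.e k) (B.e' i)) = 0 := fun k => by
    rcases eq_or_ne k i with rfl | hk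
    · exact B.em'_ξ_e_e'_eq_zero ξ hc hl hij _
    · exact B.em'_ξ_e_e'_eq_zero ξ hc hl hk _
  have hf : ∀ k, B.em' (ξ (B.f k) (B.e' i)) = 0 := fun k => by
    rcases eq_or_ne k i with rfl | hk
    · rw [B.em'_ξ_f_e'_self ξ hsk hc hl, B.em'_ξ_e_f'_self_eq_zero ξ hsk hc hl]
    · exact B.em'_ξ_f_e'_eq_zero_of_ne ξ hc hl hk
  rw [dualBr_dualBr_apply B.basis]
  simp only [Fintype.sum_sum_type, Fin.sum_univ_two, basis_em, basis_e0, basis_e, basis_f,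
    coord_em, coord_e0, coord_e, coord_f, he, hf, B.em'_ξ_e0_e'_eq_zero ξ hc, zero_mul,
    Finset.sum_const_zero, add_zero]
  rw [B.em'_ξ_em_e' ξ hsk hc, hsk (B.e i) B.e0' B.em']
  ring

theorem em'_ξ_e_e0'_eq_zero_and_em'_ξ_f_e0'_eq_zero (hξ : IsBialgebra ξ)
    (hl : ∀ k, 0 < lam k) {i j : Fin n} (hij : i ≠ j) :
    B.em' (ξ (B.e i) B.e0') = 0 ∧ B.em' (ξ (B.f i) B.e0') = 0 := by
  obtain ⟨hsk, hc, hjac⟩ := hξ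
  have h := LinearMap.congr_fun (hjac B.em' B.e0' (B.e' i)) (B.e i)
  rw [LinearMap.add_apply, LinearMap.add_apply, B.dualBr_dualBr_em'_e0'_e'_apply_e ξ hsk hc hl,
    B.dualBr_dualBr_e0'_e'_em'_apply_e ξ hsk hc hl hij,
    B.dualBr_dualBr_e'_em'_e0'_apply_e ξ hsk hc hl hij, LinearMap.zero_apply] at h
  have hsum : B.em' (ξ (B.f i) B.e0') ^ 2 + B.em' (ξ (B.e i) B.e0') ^ 2 = 0 :=
    eq_zero_of_ne_zero_of_mul_left_eq_zero (hl i).ne' (by linear_combination h)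
  obtain ⟨hf, he⟩ := (add_eq_zero_iff_of_nonneg (sq_nonneg _) (sq_nonneg _)).mp hsum
  exact ⟨eq_zero_of_pow_eq_zero he, eq_zero_of_pow_eq_zero hf⟩

theorem f'_ξ_e'_self_eq_zero (hξ : IsBialgebra ξ) (hl : ∀ k, 0 < lam k) {i j : Fin n}
    (hij : i ≠ j) (u : L) : B.f' i (ξ u (B.e' i)) = 0 := by
  obtain ⟨he0, hf0⟩ := B.em'_ξ_e_e0'_eq_zero_and_em'_ξ_f_e0'_eq_zero ξ hξ hl hij
  obtain ⟨hsk, hc, -⟩ := hξ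
  have hbasis : ∀ w, B.f' i (ξ (B.basis w) (B.e' i)) = 0 := by
    rintro (w | k | k)
    · fin_cases w
      · exact B.f'_ξ_em_e'_self_eq_zero ξ hsk hc i
      · exact B.f'_ξ_e0_e'_self_eq_zero ξ hsk hc i
    · rcases eq_or_ne k i with rfl | hk
      · rw [basis_e, B.f'_ξ_e_e'_self ξ hsk hc hl, hf0, mul_zero]
      · exact B.f'_ξ_e_e'_diag_eq_zero ξ hsk hc hl hk
    · rcases eq_or_ne k i with rfl | hk
      · rw [basis_f, B.f'_ξ_f_e'_self ξ hsk hc hl, he0, mul_zero]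
      · exact B.f'_ξ_f_e'_diag_eq_zero ξ hsk hc hl hk
  have hzero : (B.f' i : L →ₗ[ℝ] ℝ) ∘ₗ ξ.flip (B.e' i) = 0 := B.basis.ext hbasis
  exact LinearMap.congr_fun hzero u

end OscAlg

theorem oscillator_bialgebra_coefficients_vanish_general
    {n : ℕ} {lam : Fin n → ℝ} (hlam : OscParam lam)
    {L : Type} [LieRing L] [LieAlgebra ℝ L] (B : OscAlg n lam L)
    (ξ : L →ₗ[ℝ] (Dual ℝ L →ₗ[ℝ] L))
    (hbial : IsBialgebra ξ)
    (i j : Fin n) (hij : i ≠ j) :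
    (∀ u : L, B.f' i (ξ u (B.e' i)) = 0) ∧
    (B.e' j (ξ (B.e i) (B.e' i)) = 0 ∧ B.e' j (ξ (B.f i) (B.e' i)) = 0 ∧
     B.e' j (ξ (B.e j) (B.e' i)) = 0 ∧ B.e' j (ξ (B.f j) (B.e' i)) = 0) ∧
    (B.f' j (ξ (B.e i) (B.f' i)) = 0 ∧ B.f' j (ξ (B.f i) (B.f' i)) = 0 ∧
     B.f' j (ξ (B.e j) (B.f' i)) = 0 ∧ B.f' j (ξ (B.f j) (B.f' i)) = 0) ∧
    (B.f' j (ξ (B.e i) (B.e' i)) = 0 ∧ B.f' j (ξ (B.f i) (B.e' i)) = 0 ∧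
     B.f' j (ξ (B.e j) (B.e' i)) = 0 ∧ B.f' j (ξ (B.f j) (B.e' i)) = 0) := by
  have hl := hlam.1
  obtain ⟨hei, hfi⟩ := B.em'_ξ_e_e0'_eq_zero_and_em'_ξ_f_e0'_eq_zero ξ hbial hl hij
  obtain ⟨hej, hfj⟩ := B.em'_ξ_e_e0'_eq_zero_and_em'_ξ_f_e0'_eq_zero ξ hbial hl hij.symm
  have hcii := B.f'_ξ_e'_self_eq_zero ξ hbial hl hij
  obtain ⟨hsk, hc, -⟩ := hbial
  refine ⟨hcii, ⟨?_, ?_, ?_, ?_⟩, ⟨?_, ?_, ?_, ?_⟩, ⟨?_, ?_, ?_, ?_⟩⟩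
  · exact B.e'_ξ_e_e'_eq_zero_of_ne ξ hsk hc hl hij
  · rw [B.e'_ξ_f_e'_of_ne ξ hsk hc hij, hfj, mul_zero]
  · rw [hsk, B.e'_ξ_e_e'_eq_zero_of_ne ξ hsk hc hl hij.symm, neg_zero]
  · rw [hsk, B.e'_ξ_f_e'_of_ne ξ hsk hc hij.symm, hfi, mul_zero, neg_zero]
  · rw [B.f'_ξ_e_f'_of_ne ξ hsk hc hij, hej, mul_zero]
  · rw [hsk, B.f'_ξ_f_f'_eq_zero_of_ne ξ hsk hc hl hij, neg_zero]
  · rw [hsk, B.f'_ξ_e_f'_of_ne ξ hsk hc hij.symm, hei, mul_zero, neg_zero]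
  · exact B.f'_ξ_f_f'_eq_zero_of_ne ξ hsk hc hl hij.symm
  · rw [hsk, B.e'_ξ_e_f'_eq_zero_of_ne ξ hsk hc hl hij, neg_zero]
  · rw [B.f'_ξ_f_e'_of_ne ξ hsk hc hij, hej, mul_zero]
  · rw [B.f'_ξ_e_e'_of_ne ξ hsk hc hij.symm, hfi, mul_zero]
  · exact B.f'_ξ_f_e'_eq_zero_of_ne ξ hsk hc hl hij.symm

/-- **Proposition.** For a Lie bialgebra structure `ξ` on an oscillator Lie algebra and
all `i ≠ j`: `c_{i,i} = 0` as a functional on `𝔤_λ`, and `b_{i,j}`, `b̌_{i,j}`,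
`c_{i,j}` vanish on `e_i, ě_i, e_j, ě_j`. -/
theorem oscillator_bialgebra_coefficients_vanish
    {n : ℕ} (hn : 0 < n) {lam : Fin n → ℝ} (hlam : OscParam lam)
    {L : Type} [LieRing L] [LieAlgebra ℝ L] (B : OscAlg n lam L)
    (ξ : L →ₗ[ℝ] (Dual ℝ L →ₗ[ℝ] L))
    (hbial : IsBialgebra ξ)
    (i j : Fin n) (hij : i ≠ j) :
    (∀ u : L, B.f' i (ξ u (B.e' i)) = 0) ∧
    (B.e' j (ξ (B.e i) (B.e' i)) = 0 ∧ B.e' j (ξ (B.f i) (B.e' i)) = 0 ∧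
     B.e' j (ξ (B.e j) (B.e' i)) = 0 ∧ B.e' j (ξ (B.f j) (B.e' i)) = 0) ∧
    (B.f' j (ξ (B.e i) (B.f' i)) = 0 ∧ B.f' j (ξ (B.f i) (B.f' i)) = 0 ∧
     B.f' j (ξ (B.e j) (B.f' i)) = 0 ∧ B.f' j (ξ (B.f j) (B.f' i)) = 0) ∧
    (B.f' j (ξ (B.e i) (B.e' i)) = 0 ∧ B.f' j (ξ (B.f i) (B.e' i)) = 0 ∧
     B.f' j (ξ (B.e j) (B.e' i)) = 0 ∧ B.f' j (ξ (B.f j) (B.e' i)) = 0) :=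
  oscillator_bialgebra_coefficients_vanish_general hlam B ξ hbial i j hij
end
end

section
/- Let 𝔤 = sl(2,ℝ) with basis e₁, e₂, e₃ as below, and for a, b, c ∈ ℝ let r : 𝔤* → 𝔤 be the skew-symmetric linear map with r(e₁*) = −a e₂ − b e₃, r(e₂*) = a e₁ − c e₃, r(e₃*) = b e₁ + c e₂. Then r is a solution of the classical Yang–Baxter equation if and only if 4ab + c² = 0. -/
open Module LinearMap

noncomputable section

/-!
The left-hand side of the Yang–Baxter equation is an alternating trilinear form in
`(α, β, γ)`, by antisymmetry of the bracket alone. As `𝔤*` has dimension three, it equals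
`det(α, β, γ)` times its value on the dual basis `(e₁*, e₂*, e₃*)`, and a direct computation
with the `sl(2)` brackets gives that value as `-(4ab + c²)`.
-/

section CYBE

variable {R L : Type*} [CommRing R] [LieRing L] [LieAlgebra R L] (r : Dual R L →ₗ[R] L)

def cybeForm : Dual R L [⋀^Fin 3]→ₗ[R] R where
  toFun v := v 2 ⁅r (v 0), r (v 1)⁆ + v 0 ⁅r (v 1), r (v 2)⁆ + v 1 ⁅r (v 2), r (v 0)⁆
  map_update_add' := by
    intro inst v i x y
    -- `Function.update` is taken with an arbitrary `DecidableEq` instance; make it the canonical one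
    obtain rfl := Subsingleton.elim inst (instDecidableEqFin 3)
    fin_cases i <;>
    simp only [Fin.zero_eta, Fin.mk_one, Fin.reduceFinMk, Fin.isValue, ne_eq, Fin.reduceEq,
      zero_ne_one, one_ne_zero, not_false_eq_true, Function.update_self, Function.update_of_ne,
      LinearMap.add_apply, map_add, lie_add, add_lie] <;>
    ring
  map_update_smul' := by
    intro inst v i t x
    obtain rfl := Subsingleton.elim inst (instDecidableEqFin 3)
    fin_cases i <;>
    simp only [Fin.zero_eta, Fin.mk_one, Fin.reduceFinMk, Fin.isValue, ne_eq, Fin.reduceEq,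
      zero_ne_one, one_ne_zero, not_false_eq_true, Function.update_self, Function.update_of_ne,
      LinearMap.smul_apply, smul_eq_mul, map_smul, lie_smul, smul_lie] <;>
    ring
  map_eq_zero_of_eq' v i j hij hne := by
    fin_cases i <;> fin_cases j <;>
    simp only [Fin.zero_eta, Fin.mk_one, Fin.reduceFinMk, Fin.isValue, ne_eq, Fin.reduceEq,
      zero_ne_one, one_ne_zero, not_false_eq_true, not_true_eq_false] at hne hij <;>
    rw [hij] <;>
    simp only [lie_self, map_zero, zero_add, add_zero] <;>
    rw [← lie_skew, map_neg, neg_add_cancel]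

theorem cybeForm_apply (v : Fin 3 → Dual R L) :
    cybeForm r v = v 2 ⁅r (v 0), r (v 1)⁆ + v 0 ⁅r (v 1), r (v 2)⁆ + v 1 ⁅r (v 2), r (v 0)⁆ :=
  rfl

theorem cybeForm_eq_zero_iff_forall :
    cybeForm r = 0 ↔ ∀ α β γ : Dual R L, γ ⁅r α, r β⁆ + α ⁅r β, r γ⁆ + β ⁅r γ, r α⁆ = 0 := by
  refine ⟨fun h α β γ => by simpa [cybeForm_apply] using congr($h ![α, β, γ]), fun h => ?_⟩
  ext v
  exact h (v 0) (v 1) (v 2)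

theorem cybeForm_eq_zero_iff_coord (b : Basis (Fin 3) R L) :
    cybeForm r = 0 ↔ cybeForm r b.coord = 0 := by
  refine ⟨fun h => h ▸ rfl, fun h => ?_⟩
  rw [(cybeForm r).eq_smul_basis_det b.dualBasis, Basis.coe_dualBasis, h, zero_smul]

end CYBE

theorem cybeForm_coord_sl2 {R L : Type*} [CommRing R] [LieRing L] [LieAlgebra R L]
    (Bb : Basis (Fin 3) R L) (h12 : ⁅Bb 0, Bb 1⁆ = (2 : R) • Bb 1)
    (h13 : ⁅Bb 0, Bb 2⁆ = (-2 : R) • Bb 2) (h23 : ⁅Bb 1, Bb 2⁆ = -Bb 0) (a b c : R)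
    (r : Dual R L →ₗ[R] L)
    (h1 : r (Bb.coord 0) = -a • Bb 1 - b • Bb 2) (h2 : r (Bb.coord 1) = a • Bb 0 - c • Bb 2)
    (h3 : r (Bb.coord 2) = b • Bb 0 + c • Bb 1) :
    cybeForm r Bb.coord = -(4 * a * b + c ^ 2) := by
  have h21 : ⁅Bb 1, Bb 0⁆ = (-2 : R) • Bb 1 := by rw [← lie_skew, h12, neg_smul]
  have h31 : ⁅Bb 2, Bb 0⁆ = (2 : R) • Bb 2 := by rw [← lie_skew, h13, neg_smul, neg_neg]
  have h32 : ⁅Bb 2, Bb 1⁆ = Bb 0 := by rw [← lie_skew, h23, neg_neg]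
  simp only [cybeForm_apply, h1, h2, h3, lie_add, add_lie, lie_sub, sub_lie, lie_smul, smul_lie,
    lie_self, h12, h13, h23, h21, h31, h32, map_add, map_sub, map_smul, map_neg,
    map_zero, Basis.coord_apply, Basis.repr_self, Finsupp.single_eq_same, Finsupp.single_eq_of_ne,
    ne_eq, Fin.reduceEq, not_false_eq_true, smul_eq_mul]
  ring

theorem sl2_yang_baxter_iff_general
    {L : Type} [LieRing L] [LieAlgebra ℝ L]
    (Bb : Basis (Fin 3) ℝ L)
    (h12 : ⁅Bb 0, Bb 1⁆ = (2 : ℝ) • Bb 1)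
    (h13 : ⁅Bb 0, Bb 2⁆ = (-2 : ℝ) • Bb 2)
    (h23 : ⁅Bb 1, Bb 2⁆ = -Bb 0)
    (a b c : ℝ) (r : Dual ℝ L →ₗ[ℝ] L)
    (h1 : r (Bb.coord 0) = -a • Bb 1 - b • Bb 2)
    (h2 : r (Bb.coord 1) = a • Bb 0 - c • Bb 2)
    (h3 : r (Bb.coord 2) = b • Bb 0 + c • Bb 1) :
    (∀ α β γ : Dual ℝ L, γ ⁅r α, r β⁆ + α ⁅r β, r γ⁆ + β ⁅r γ, r α⁆ = 0)
      ↔ 4 * a * b + c ^ 2 = 0 := by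
  rw [← cybeForm_eq_zero_iff_forall, cybeForm_eq_zero_iff_coord r Bb,
    cybeForm_coord_sl2 Bb h12 h13 h23 a b c r h1 h2 h3, neg_eq_zero]

/-- **Example (sl(2,ℝ)).** Let `𝔤 = sl(2,ℝ)` with basis `e₁, e₂, e₃` satisfying
`[e₁,e₂] = 2e₂`, `[e₁,e₃] = −2e₃`, `[e₂,e₃] = −e₁`, and let `r : 𝔤* → 𝔤` be the
skew-symmetric linear map with `r(e₁*) = −a e₂ − b e₃`, `r(e₂*) = a e₁ − c e₃`,
`r(e₃*) = b e₁ + c e₂`.  Then `r` is a solution of the classical Yang–Baxter equation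
if and only if `4ab + c² = 0`. -/
theorem sl2_yang_baxter_iff
    {L : Type} [LieRing L] [LieAlgebra ℝ L]
    (Bb : Basis (Fin 3) ℝ L)
    (h12 : ⁅Bb 0, Bb 1⁆ = (2 : ℝ) • Bb 1)
    (h13 : ⁅Bb 0, Bb 2⁆ = (-2 : ℝ) • Bb 2)
    (h23 : ⁅Bb 1, Bb 2⁆ = -Bb 0)
    (a b c : ℝ) (r : Dual ℝ L →ₗ[ℝ] L)
    (hskew : IsBivector r)
    (h1 : r (Bb.coord 0) = -a • Bb 1 - b • Bb 2)
    (h2 : r (Bb.coord 1) = a • Bb 0 - c • Bb 2)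
    (h3 : r (Bb.coord 2) = b • Bb 0 + c • Bb 1) :
    (∀ α β γ : Dual ℝ L, γ ⁅r α, r β⁆ + α ⁅r β, r γ⁆ + β ⁅r γ, r α⁆ = 0)
      ↔ 4 * a * b + c ^ 2 = 0 :=
  sl2_yang_baxter_iff_general Bb h12 h13 h23 a b c r h1 h2 h3
end
end
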